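/- arXiv:2102.06933 — 9 statements merged into one kernel-verified Lean document; each statement's English description precedes it below -/
import Mathlib

section
/- Suppose each f_t : X → ℝ (t = 1,…,T) is nonnegative and α-polyhedral with minimizer v_t, and the learner plays x_t = v_t (the minimizer of f_t) with x_0 = u_0. Then for any comparator sequence u_0, u_1, …, u_T ∈ X: Σ_{t=1}^T (f_t(x_t) + ‖x_t - x_{t-1}‖) ≤ max(1, 2/α) · Σ_{t=1}^T (f_t(u_t) + ‖u_t - u_{t-1}‖). -/
/-!
Write `g t = ‖x t - u t‖` for the distance between the learner and the comparator.
By the triangle inequality the learner's movement in round `t` is at most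
`g t + ‖u t - u (t - 1)‖ + g (t - 1)`, and since `g 0 = 0` the sum of the `g (t - 1)`
is at most the sum of the `g t`. So it suffices that each round satisfies
`f t (v t) + 2 ‖v t - u t‖ ≤ max 1 (2 / α) · f t (u t)`, which follows from
`f t (u t) ≥ f t (v t) + α ‖u t - v t‖` together with `f t (v t) ≥ 0`.
-/

open Finset

theorem Finset.sum_Icc_one_sub_pred {M : Type*} [AddCommGroup M] (g : ℕ → M) (T : ℕ) :
    ∑ t ∈ Icc 1 T, (g t - g (t - 1)) = g T - g 0 := by
  induction T with
  | zero => simp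
  | succ T ih =>
    rw [sum_Icc_succ_top (by omega), ih, Nat.add_sub_cancel]
    abel

theorem norm_sub_le_norm_sub_add_norm_sub_add_norm_sub {E : Type*} [SeminormedAddCommGroup E] (a b a' b' : E) :
    ‖a - b‖ ≤ ‖a - a'‖ + ‖a' - b'‖ + ‖b' - b‖ := by
  simpa only [dist_eq_norm] using dist_triangle4 a a' b' b

theorem sum_cost_add_movement_le {E : Type*} [SeminormedAddCommGroup E] (T : ℕ)
    (a b : ℕ → ℝ) (x u : ℕ → E) {c : ℝ} (hc : 1 ≤ c) (h0 : x 0 = u 0)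
    (hround : ∀ t ∈ Icc 1 T, a t + 2 * ‖x t - u t‖ ≤ c * b t) :
    ∑ t ∈ Icc 1 T, (a t + ‖x t - x (t - 1)‖) ≤
      c * ∑ t ∈ Icc 1 T, (b t + ‖u t - u (t - 1)‖) := by
  set g : ℕ → ℝ := fun t => ‖x t - u t‖
  have hround' : ∀ t ∈ Icc 1 T, a t + ‖x t - x (t - 1)‖ ≤
      c * (b t + ‖u t - u (t - 1)‖) - (g t - g (t - 1)) := by
    intro t ht
    have hmove := norm_sub_le_norm_sub_add_norm_sub_add_norm_sub (x t) (x (t - 1)) (u t) (u (t - 1))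
    rw [norm_sub_rev (u (t - 1))] at hmove
    nlinarith [hround t ht, norm_nonneg (u t - u (t - 1))]
  calc ∑ t ∈ Icc 1 T, (a t + ‖x t - x (t - 1)‖)
      ≤ ∑ t ∈ Icc 1 T, (c * (b t + ‖u t - u (t - 1)‖) - (g t - g (t - 1))) :=
        sum_le_sum hround'
    _ = c * ∑ t ∈ Icc 1 T, (b t + ‖u t - u (t - 1)‖) - (g T - g 0) := by
        rw [sum_sub_distrib, sum_Icc_one_sub_pred, mul_sum]
    _ ≤ c * ∑ t ∈ Icc 1 T, (b t + ‖u t - u (t - 1)‖) := by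
        simp only [g, h0, sub_self, norm_zero, sub_zero]
        linarith [norm_nonneg (x T - u T)]

theorem add_two_mul_le_of_sharp_min {α c fu fv r : ℝ} (hc : 1 ≤ c) (hcα : 2 ≤ c * α)
    (hfv : 0 ≤ fv) (hr : 0 ≤ r) (hsharp : fu - fv ≥ α * r) :
    fv + 2 * r ≤ c * fu := by
  nlinarith

theorem two_le_max_one_two_div_mul {α : ℝ} (hα : 0 < α) : 2 ≤ max 1 (2 / α) * α := by
  calc (2 : ℝ) = 2 / α * α := (div_mul_cancel₀ 2 hα.ne').symm
    _ ≤ max 1 (2 / α) * α := by gcongr; exact le_max_right _ _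

open Finset in
theorem stmt_2_general {d : ℕ} (T : ℕ) (X : Set (EuclideanSpace ℝ (Fin d)))
    (f : ℕ → EuclideanSpace ℝ (Fin d) → ℝ)
    (v x u : ℕ → EuclideanSpace ℝ (Fin d))
    (α : ℝ) (hα : 0 < α)
    (hu : ∀ t ≤ T, u t ∈ X)
    (hvX : ∀ t ∈ Icc 1 T, v t ∈ X)
    (hnonneg : ∀ t ∈ Icc 1 T, ∀ y ∈ X, 0 ≤ f t y)
    (hpoly : ∀ t ∈ Icc 1 T, ∀ y ∈ X, f t y - f t (v t) ≥ α * ‖y - v t‖)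
    (hx : ∀ t ∈ Icc 1 T, x t = v t)
    (hx0 : x 0 = u 0) :
    ∑ t ∈ Icc 1 T, (f t (x t) + ‖x t - x (t - 1)‖) ≤
      max 1 (2 / α) * ∑ t ∈ Icc 1 T, (f t (u t) + ‖u t - u (t - 1)‖) := by
  refine sum_cost_add_movement_le T (fun t => f t (x t)) (fun t => f t (u t)) x u
    (le_max_left _ _) hx0 fun t ht => ?_
  rw [hx t ht, norm_sub_rev]
  exact add_two_mul_le_of_sharp_min (le_max_left _ _) (two_le_max_one_two_div_mul hα)
    (hnonneg t ht _ (hvX t ht)) (norm_nonneg _) (hpoly t ht _ (hu t (mem_Icc.mp ht).2))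

open Finset in
theorem stmt_2 {d : ℕ} (T : ℕ) (X : Set (EuclideanSpace ℝ (Fin d)))
    (f : ℕ → EuclideanSpace ℝ (Fin d) → ℝ)
    (v x u : ℕ → EuclideanSpace ℝ (Fin d))
    (α : ℝ) (hα : 0 < α)
    (hu : ∀ t ≤ T, u t ∈ X)
    (hvX : ∀ t ∈ Icc 1 T, v t ∈ X)
    (hnonneg : ∀ t ∈ Icc 1 T, ∀ y ∈ X, 0 ≤ f t y)
    (hmin : ∀ t ∈ Icc 1 T, ∀ y ∈ X, f t (v t) ≤ f t y)
    (hpoly : ∀ t ∈ Icc 1 T, ∀ y ∈ X, f t y - f t (v t) ≥ α * ‖y - v t‖)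
    (hx : ∀ t ∈ Icc 1 T, x t = v t)
    (hx0 : x 0 = u 0) :
    ∑ t ∈ Icc 1 T, (f t (x t) + ‖x t - x (t - 1)‖) ≤
      max 1 (2 / α) * ∑ t ∈ Icc 1 T, (f t (u t) + ‖u t - u (t - 1)‖) :=
  stmt_2_general T X f v x u α hα hu hvX hnonneg hpoly hx hx0
end

section
/- Suppose each f_t : X → ℝ (t = 1,…,T) is nonnegative and λ-quadratic growth with minimizer v_t, i.e., f_t(x) - f_t(v_t) ≥ (λ/2)‖x - v_t‖² for all x ∈ X, and the learner plays x_t = v_t with x_0 = u_0. Then for any u_0, u_1, …, u_T ∈ X: Σ_{t=1}^T (f_t(x_t) + ½‖x_t - x_{t-1}‖²) ≤ (1 + 4/λ) · Σ_{t=1}^T (f_t(u_t) + ½‖u_t - u_{t-1}‖²). -/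
/-! The learner's per-round cost is charged against the comparator's through the potential
`Φ t = (λ + 4)/4 · ‖u t - x t‖²`, which vanishes at `t = 0`. Since `x t` and `x (t-1)` are within
`‖u t - x t‖` and `‖u (t-1) - x (t-1)‖` of `u t` and `u (t-1)`, a weighted Cauchy–Schwarz inequality
bounds the learner's move by the comparator's move plus the two distances; quadratic growth pays
for the distance at time `t` and leaves the drop `Φ (t-1) - Φ t`, which telescopes. -/

open Finset

lemma Finset.sum_Icc_one_sub_telescope {M : Type*} [AddCommGroup M] (Φ : ℕ → M) (T : ℕ) :
    ∑ t ∈ Icc 1 T, (Φ (t - 1) - Φ t) = Φ 0 - Φ T := by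
  induction T with
  | zero => simp
  | succ T ih =>
    rw [sum_Icc_succ_top (by omega), ih, Nat.add_sub_cancel]
    abel

lemma norm_sub_le_of_near {E : Type*} [SeminormedAddCommGroup E] (x x' u u' : E) :
    ‖x - x'‖ ≤ ‖u - x‖ + ‖u - u'‖ + ‖u' - x'‖ := by
  calc ‖x - x'‖ = ‖-(u - x) + (u - u') + (u' - x')‖ := by congr 1; abel
    _ ≤ ‖-(u - x)‖ + ‖u - u'‖ + ‖u' - x'‖ := norm_add₃_le
    _ = _ := by rw [norm_neg]

/-- Weighted Cauchy–Schwarz with weights `(λ+4)/2, (λ+4)/λ, (λ+4)/2`, whose reciprocals sum to 1. -/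
lemma sq_add_add_le {lam : ℝ} (hlam : 0 < lam) (a b c : ℝ) :
    (a + b + c) ^ 2 ≤ (lam + 4) / 2 * (a ^ 2 + c ^ 2) + (lam + 4) / lam * b ^ 2 := by
  have hscaled :
      lam * (a + b + c) ^ 2 ≤ lam * ((lam + 4) / 2 * (a ^ 2 + c ^ 2)) + (lam + 4) * b ^ 2 := by
    nlinarith [sq_nonneg (lam * (a - c)), sq_nonneg (lam * (a + c) - 4 * b), sq_nonneg (a - c),
      sq_nonneg (a + c - 2 * b), mul_pos hlam hlam]
  have hb : lam * ((lam + 4) / lam * b ^ 2) = (lam + 4) * b ^ 2 := by field_simp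
  rw [← mul_le_mul_iff_right₀ hlam, mul_add, hb]
  exact hscaled

lemma round_cost_le {lam fv fu a b c n : ℝ} (hlam : 0 < lam) (hfv : 0 ≤ fv)
    (hgrowth : fu - fv ≥ lam / 2 * a ^ 2) (hn0 : 0 ≤ n) (hn : n ≤ a + b + c) :
    fv + 1 / 2 * n ^ 2 ≤
      (1 + 4 / lam) * (fu + 1 / 2 * b ^ 2) + ((lam + 4) / 4 * c ^ 2 - (lam + 4) / 4 * a ^ 2) := by
  have hK : 1 + 4 / lam = (lam + 4) / lam := by field_simp
  have hsq : n ^ 2 ≤ (a + b + c) ^ 2 := pow_le_pow_left₀ hn0 hn 2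
  have hcs := sq_add_add_le hlam a b c
  have hgrowthK : (lam + 4) / lam * (fu - fv) ≥ (lam + 4) / 2 * a ^ 2 := by
    calc (lam + 4) / lam * (fu - fv) ≥ (lam + 4) / lam * (lam / 2 * a ^ 2) := by
          gcongr
      _ = (lam + 4) / 2 * a ^ 2 := by field_simp
  have hKfv : fv ≤ (lam + 4) / lam * fv :=
    le_mul_of_one_le_left hfv (by rw [← hK]; linarith [div_pos (by norm_num : (0:ℝ) < 4) hlam])
  rw [hK]
  linarith

open Finset in
theorem stmt_3_general {d : ℕ} (T : ℕ) (X : Set (EuclideanSpace ℝ (Fin d)))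
    (f : ℕ → EuclideanSpace ℝ (Fin d) → ℝ)
    (v x u : ℕ → EuclideanSpace ℝ (Fin d))
    (lam : ℝ) (hlam : 0 < lam)
    (hu : ∀ t ≤ T, u t ∈ X)
    (hvX : ∀ t ∈ Icc 1 T, v t ∈ X)
    (hnonneg : ∀ t ∈ Icc 1 T, ∀ y ∈ X, 0 ≤ f t y)
    (hqg : ∀ t ∈ Icc 1 T, ∀ y ∈ X, f t y - f t (v t) ≥ lam / 2 * ‖y - v t‖ ^ 2)
    (hx : ∀ t ∈ Icc 1 T, x t = v t)
    (hx0 : x 0 = u 0) :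
    ∑ t ∈ Icc 1 T, (f t (x t) + 1 / 2 * ‖x t - x (t - 1)‖ ^ 2) ≤
      (1 + 4 / lam) * ∑ t ∈ Icc 1 T, (f t (u t) + 1 / 2 * ‖u t - u (t - 1)‖ ^ 2) := by
  set Φ : ℕ → ℝ := fun t ↦ (lam + 4) / 4 * ‖u t - x t‖ ^ 2
  have hround : ∀ t ∈ Icc 1 T, f t (x t) + 1 / 2 * ‖x t - x (t - 1)‖ ^ 2 ≤
      (1 + 4 / lam) * (f t (u t) + 1 / 2 * ‖u t - u (t - 1)‖ ^ 2) + (Φ (t - 1) - Φ t) := by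
    intro t ht
    have huX : u t ∈ X := hu t (mem_Icc.mp ht).2
    have hfx : 0 ≤ f t (x t) := hx t ht ▸ hnonneg t ht _ (hvX t ht)
    have hgrowth : f t (u t) - f t (x t) ≥ lam / 2 * ‖u t - x t‖ ^ 2 := hx t ht ▸ hqg t ht _ huX
    exact round_cost_le hlam hfx hgrowth (norm_nonneg _) (norm_sub_le_of_near _ _ _ _)
  have hΦ0 : Φ 0 = 0 := by simp [Φ, hx0]
  have hΦT : 0 ≤ Φ T := by positivity
  calc ∑ t ∈ Icc 1 T, (f t (x t) + 1 / 2 * ‖x t - x (t - 1)‖ ^ 2)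
      ≤ ∑ t ∈ Icc 1 T,
          ((1 + 4 / lam) * (f t (u t) + 1 / 2 * ‖u t - u (t - 1)‖ ^ 2) + (Φ (t - 1) - Φ t)) :=
        sum_le_sum hround
    _ = (1 + 4 / lam) * ∑ t ∈ Icc 1 T, (f t (u t) + 1 / 2 * ‖u t - u (t - 1)‖ ^ 2)
          + (Φ 0 - Φ T) := by
        rw [sum_add_distrib, sum_Icc_one_sub_telescope, mul_sum]
    _ ≤ (1 + 4 / lam) * ∑ t ∈ Icc 1 T, (f t (u t) + 1 / 2 * ‖u t - u (t - 1)‖ ^ 2) := by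
        linarith

open Finset in
theorem stmt_3 {d : ℕ} (T : ℕ) (X : Set (EuclideanSpace ℝ (Fin d)))
    (f : ℕ → EuclideanSpace ℝ (Fin d) → ℝ)
    (v x u : ℕ → EuclideanSpace ℝ (Fin d))
    (lam : ℝ) (hlam : 0 < lam)
    (hu : ∀ t ≤ T, u t ∈ X)
    (hvX : ∀ t ∈ Icc 1 T, v t ∈ X)
    (hnonneg : ∀ t ∈ Icc 1 T, ∀ y ∈ X, 0 ≤ f t y)
    (hmin : ∀ t ∈ Icc 1 T, ∀ y ∈ X, f t (v t) ≤ f t y)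
    (hqg : ∀ t ∈ Icc 1 T, ∀ y ∈ X, f t y - f t (v t) ≥ lam / 2 * ‖y - v t‖ ^ 2)
    (hx : ∀ t ∈ Icc 1 T, x t = v t)
    (hx0 : x 0 = u 0) :
    ∑ t ∈ Icc 1 T, (f t (x t) + 1 / 2 * ‖x t - x (t - 1)‖ ^ 2) ≤
      (1 + 4 / lam) * ∑ t ∈ Icc 1 T, (f t (u t) + 1 / 2 * ‖u t - u (t - 1)‖ ^ 2) :=
  stmt_3_general T X f v x u lam hlam hu hvX hnonneg hqg hx hx0
end

section
/- Suppose X ⊆ ℝ^d is convex, each f_t : X → ℝ is convex, nonnegative, and λ-quadratic growth with minimizer v_t. Let γ = λ/(λ + √λ) and let x_t = argmin_{x∈X} (f_t(x) + (γ/2)‖x - x_{t-1}‖²) with x_0 = u_0. Then for any u_0, u_1, …, u_T ∈ X: Σ_{t=1}^T (f_t(x_t) + ½‖x_t - x_{t-1}‖²) ≤ (1 + 2/√λ) · Σ_{t=1}^T (f_t(u_t) + ½‖u_t - u_{t-1}‖²). -/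
/-!
Write `σ = √λ`, so that `γ = σ / (σ + 1)`. Since `f_t + (γ/2)‖· - x_{t-1}‖²` is `γ`-strongly
convex and minimized at `x_t`, the three-point inequality
`f_t(x_t) + (γ/2)‖x_t - x_{t-1}‖² + (γ/2)‖u_t - x_t‖² ≤ f_t(u_t) + (γ/2)‖u_t - x_{t-1}‖²` holds.
Multiplied by `1 + 1/σ = 1/γ`, and combined with `(1/σ) f_t(y) ≥ (σ/2)‖y - v_t‖²` (quadratic growth
and `f_t(v_t) ≥ 0`) and two triangle inequalities with AM-GM, it shows that the potential
`Φ_t = ½‖x_t - u_t‖² + (σ/2)(‖x_t - v_t‖² + ‖u_t - v_t‖²)` satisfies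
`f_t(x_t) + ½‖x_t - x_{t-1}‖² + Φ_t ≤ (1 + 2/σ)(f_t(u_t) + ½‖u_t - u_{t-1}‖²) + Φ_{t-1}`.
Summing telescopes, with `Φ_0 = 0` because `x_0 = u_0`, and `Φ_T ≥ 0`.
-/

open Finset Filter Topology

section NormedAddCommGroup
variable {E : Type*} [NormedAddCommGroup E]

noncomputable def greedyPotential (σ : ℝ) (x u w : E) : ℝ :=
  1 / 2 * ‖x - u‖ ^ 2 + σ / 2 * (‖x - w‖ ^ 2 + ‖u - w‖ ^ 2)

lemma greedyPotential_nonneg {σ : ℝ} (hσ : 0 ≤ σ) (x u w : E) :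
    0 ≤ greedyPotential σ x u w := by
  unfold greedyPotential
  positivity

lemma half_sq_norm_sub_le_add_greedyPotential {σ : ℝ} (hσ : 0 < σ) (a b c w : E) :
    1 / 2 * ‖a - b‖ ^ 2 ≤ (1 / 2 + 1 / σ) * ‖a - c‖ ^ 2 + greedyPotential σ b c w := by
  unfold greedyPotential
  set S := ‖a - c‖
  set P := ‖b - w‖
  set Q := ‖c - w‖
  have hab : ‖a - b‖ ≤ S + ‖b - c‖ := by
    simpa only [norm_sub_rev c b] using norm_sub_le_norm_sub_add_norm_sub a c b
  have hbc : ‖b - c‖ ≤ P + Q := by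
    simpa only [norm_sub_rev w c] using norm_sub_le_norm_sub_add_norm_sub b w c
  have hS : 0 ≤ S := norm_nonneg _
  -- AM-GM: `S P ≤ S² / (2σ) + σ P² / 2`, and likewise for `Q`
  have hamgm : S * (P + Q) ≤ S ^ 2 / σ + σ / 2 * (P ^ 2 + Q ^ 2) := by
    have h : σ * (S * (P + Q)) ≤ σ * (S ^ 2 / σ + σ / 2 * (P ^ 2 + Q ^ 2)) := by
      rw [mul_add σ, mul_div_cancel₀ _ hσ.ne']
      nlinarith [sq_nonneg (σ * P - S), sq_nonneg (σ * Q - S)]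
    exact le_of_mul_le_mul_left h hσ
  have hsq : ‖a - b‖ ^ 2 ≤ (S + ‖b - c‖) ^ 2 := pow_le_pow_left₀ (norm_nonneg _) hab 2
  have hSR := mul_le_mul_of_nonneg_left hbc hS
  have hsplit : (1 / 2 + 1 / σ) * S ^ 2 = 1 / 2 * S ^ 2 + S ^ 2 / σ := by ring
  linarith

variable [InnerProductSpace ℝ E] {s : Set E}

lemma strongConvexOn_mul_sq_norm_sub (hs : Convex ℝ s) (m : ℝ) (c : E) :
    StrongConvexOn s m fun y ↦ m / 2 * ‖y - c‖ ^ 2 := by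
  rw [strongConvexOn_iff_convex]
  have hlin : (fun y : E ↦ m / 2 * ‖y - c‖ ^ 2 - m / 2 * ‖y‖ ^ 2) =
      fun y ↦ m / 2 * ‖c‖ ^ 2 + ((-m) • innerSL ℝ c : E →L[ℝ] ℝ) y := by
    ext y
    rw [norm_sub_sq_real]
    simp only [smul_apply, innerSL_apply_apply, smul_eq_mul, real_inner_comm]
    ring
  rw [hlin]
  exact (convexOn_const _ hs).add (LinearMap.convexOn _ hs)

lemma StrongConvexOn.add_mul_sq_norm_sub_le_of_isMinOn {m : ℝ} {F : E → ℝ}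
    (hF : StrongConvexOn s m F) {x y : E} (hx : x ∈ s) (hmin : IsMinOn F s x) (hy : y ∈ s) :
    F x + m / 2 * ‖y - x‖ ^ 2 ≤ F y := by
  have hθ : ∀ θ ∈ Set.Ioc (0 : ℝ) 1, F x + (1 - θ) * (m / 2 * ‖y - x‖ ^ 2) ≤ F y := by
    rintro θ ⟨hθ0, hθ1⟩
    have hconv := hF.2 hx hy (sub_nonneg.2 hθ1) hθ0.le (sub_add_cancel 1 θ)
    have hle : F x ≤ F _ := hmin (hF.1 hx hy (sub_nonneg.2 hθ1) hθ0.le (sub_add_cancel 1 θ))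
    rw [norm_sub_rev] at hconv
    simp only [smul_eq_mul] at hconv
    nlinarith
  have hlim : Tendsto (fun θ : ℝ ↦ F x + (1 - θ) * (m / 2 * ‖y - x‖ ^ 2)) (𝓝[>] 0)
      (𝓝 (F x + (1 - 0) * (m / 2 * ‖y - x‖ ^ 2))) :=
    (Continuous.tendsto (by fun_prop) 0).mono_left nhdsWithin_le_nhds
  simpa using le_of_tendsto hlim (eventually_of_mem (Ioc_mem_nhdsGT one_pos) hθ)

lemma ConvexOn.add_mul_sq_norm_sub_le_of_isMinOn {g : E → ℝ} (hg : ConvexOn ℝ s g) {γ : ℝ}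
    {c x y : E} (hx : x ∈ s)
    (hmin : ∀ z ∈ s, g x + γ / 2 * ‖x - c‖ ^ 2 ≤ g z + γ / 2 * ‖z - c‖ ^ 2) (hy : y ∈ s) :
    g x + γ / 2 * ‖x - c‖ ^ 2 + γ / 2 * ‖y - x‖ ^ 2 ≤ g y + γ / 2 * ‖y - c‖ ^ 2 := by
  have hF : StrongConvexOn s γ fun z ↦ g z + γ / 2 * ‖z - c‖ ^ 2 := by
    have h := (uniformConvexOn_zero.2 hg).add (strongConvexOn_mul_sq_norm_sub hg.1 γ c)
    rwa [zero_add] at h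
  exact hF.add_mul_sq_norm_sub_le_of_isMinOn hx hmin hy

lemma greedy_step_add_greedyPotential_le {g : E → ℝ} (hg : ConvexOn ℝ s g) {σ : ℝ} (hσ : 0 < σ)
    {xp x up u wp w : E} (hx : x ∈ s) (hu : u ∈ s)
    (hgreedy : ∀ y ∈ s,
      g x + σ / (σ + 1) / 2 * ‖x - xp‖ ^ 2 ≤ g y + σ / (σ + 1) / 2 * ‖y - xp‖ ^ 2)
    (hgx : σ ^ 2 / 2 * ‖x - w‖ ^ 2 ≤ g x) (hgu : σ ^ 2 / 2 * ‖u - w‖ ^ 2 ≤ g u) :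
    g x + 1 / 2 * ‖x - xp‖ ^ 2 + greedyPotential σ x u w ≤
      (1 + 2 / σ) * (g u + 1 / 2 * ‖u - up‖ ^ 2) + greedyPotential σ xp up wp := by
  have hthree := hg.add_mul_sq_norm_sub_le_of_isMinOn hx hgreedy hu
  have hscaled : g x + 1 / σ * g x + 1 / 2 * ‖x - xp‖ ^ 2 + 1 / 2 * ‖u - x‖ ^ 2 ≤
      (1 + 1 / σ) * g u + 1 / 2 * ‖u - xp‖ ^ 2 := by
    have h := mul_le_mul_of_nonneg_left hthree (by positivity : (0 : ℝ) ≤ 1 + 1 / σ)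
    have hw : (1 + 1 / σ) * (σ / (σ + 1) / 2) = 1 / 2 := by field_simp
    linear_combination h + (‖u - xp‖ ^ 2 - ‖x - xp‖ ^ 2 - ‖u - x‖ ^ 2) * hw
  have hgrowth : ∀ {r a : ℝ}, σ ^ 2 / 2 * r ≤ a → σ / 2 * r ≤ 1 / σ * a := fun h ↦ by
    rw [one_div, ← div_eq_inv_mul, le_div_iff₀ hσ]
    linarith
  have hgx' := hgrowth hgx
  have hgu' := hgrowth hgu
  have hprev := half_sq_norm_sub_le_add_greedyPotential hσ u xp up wp
  have hsplit : (1 + 2 / σ) * (g u + 1 / 2 * ‖u - up‖ ^ 2) =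
      (1 + 1 / σ) * g u + 1 / σ * g u + (1 / 2 + 1 / σ) * ‖u - up‖ ^ 2 := by ring
  unfold greedyPotential at hprev ⊢
  rw [norm_sub_rev x u]
  linarith

end NormedAddCommGroup

lemma sum_Icc_add_le_of_le_add {a b Φ : ℕ → ℝ} {T : ℕ}
    (h : ∀ t ∈ Icc 1 T, a t + Φ t ≤ b t + Φ (t - 1)) :
    ∑ t ∈ Icc 1 T, a t + Φ T ≤ ∑ t ∈ Icc 1 T, b t + Φ 0 := by
  induction T with
  | zero => simp
  | succ T ih =>
    rw [sum_Icc_succ_top (by omega), sum_Icc_succ_top (by omega)]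
    have hT := h (T + 1) (by simp)
    have ih := ih fun t ht ↦ h t (Icc_subset_Icc_right T.le_succ ht)
    simp only [add_tsub_cancel_right] at hT
    linarith

open Finset in
theorem stmt_4_general {d : ℕ} (T : ℕ) (X : Set (EuclideanSpace ℝ (Fin d)))
    (f : ℕ → EuclideanSpace ℝ (Fin d) → ℝ)
    (v x u : ℕ → EuclideanSpace ℝ (Fin d))
    (lam γ : ℝ) (hlam : 0 < lam) (hγ : γ = lam / (lam + Real.sqrt lam))
    (hu : ∀ t ≤ T, u t ∈ X)
    (hvX : ∀ t ∈ Icc 1 T, v t ∈ X)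
    (hconv : ∀ t ∈ Icc 1 T, ConvexOn ℝ X (f t))
    (hnonneg : ∀ t ∈ Icc 1 T, ∀ y ∈ X, 0 ≤ f t y)
    (hqg : ∀ t ∈ Icc 1 T, ∀ y ∈ X, f t y - f t (v t) ≥ lam / 2 * ‖y - v t‖ ^ 2)
    (hxX : ∀ t ∈ Icc 1 T, x t ∈ X)
    (hgreedy : ∀ t ∈ Icc 1 T, ∀ y ∈ X,
      f t (x t) + γ / 2 * ‖x t - x (t - 1)‖ ^ 2 ≤ f t y + γ / 2 * ‖y - x (t - 1)‖ ^ 2)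
    (hx0 : x 0 = u 0) :
    ∑ t ∈ Icc 1 T, (f t (x t) + 1 / 2 * ‖x t - x (t - 1)‖ ^ 2) ≤
      (1 + 2 / Real.sqrt lam) *
        ∑ t ∈ Icc 1 T, (f t (u t) + 1 / 2 * ‖u t - u (t - 1)‖ ^ 2) := by
  set σ := Real.sqrt lam
  have hσ : 0 < σ := Real.sqrt_pos.2 hlam
  have hlamσ : lam = σ ^ 2 := (Real.sq_sqrt hlam.le).symm
  have hγσ : γ = σ / (σ + 1) := by
    rw [hγ, hlamσ]
    field_simp
  have hgrowth : ∀ t ∈ Icc 1 T, ∀ y ∈ X, σ ^ 2 / 2 * ‖y - v t‖ ^ 2 ≤ f t y := fun t ht y hy ↦ by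
    have hq := hqg t ht y hy
    rw [hlamσ] at hq
    linarith [hnonneg t ht (v t) (hvX t ht)]
  -- at time `0` the comparator's point stands in for the missing minimizer, so that `Φ 0 = 0`
  let w : ℕ → EuclideanSpace ℝ (Fin d) := fun t ↦ if t = 0 then u 0 else v t
  let Φ : ℕ → ℝ := fun t ↦ greedyPotential σ (x t) (u t) (w t)
  have hstep : ∀ t ∈ Icc 1 T, f t (x t) + 1 / 2 * ‖x t - x (t - 1)‖ ^ 2 + Φ t ≤
      (1 + 2 / σ) * (f t (u t) + 1 / 2 * ‖u t - u (t - 1)‖ ^ 2) + Φ (t - 1) := fun t ht ↦ by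
    have hwt : w t = v t := if_neg (by have := (mem_Icc.1 ht).1; omega)
    have hut := hu t (mem_Icc.1 ht).2
    simp only [Φ, hwt]
    exact greedy_step_add_greedyPotential_le (hconv t ht) hσ (hxX t ht) hut (hγσ ▸ hgreedy t ht)
      (hgrowth t ht _ (hxX t ht)) (hgrowth t ht _ hut)
  have hΦ0 : Φ 0 = 0 := by simp [Φ, w, hx0, greedyPotential]
  calc ∑ t ∈ Icc 1 T, (f t (x t) + 1 / 2 * ‖x t - x (t - 1)‖ ^ 2)
      ≤ ∑ t ∈ Icc 1 T, (f t (x t) + 1 / 2 * ‖x t - x (t - 1)‖ ^ 2) + Φ T :=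
        le_add_of_nonneg_right (greedyPotential_nonneg hσ.le _ _ _)
    _ ≤ ∑ t ∈ Icc 1 T, (1 + 2 / σ) * (f t (u t) + 1 / 2 * ‖u t - u (t - 1)‖ ^ 2) + Φ 0 :=
        sum_Icc_add_le_of_le_add hstep
    _ = (1 + 2 / σ) * ∑ t ∈ Icc 1 T, (f t (u t) + 1 / 2 * ‖u t - u (t - 1)‖ ^ 2) := by
        rw [hΦ0, add_zero, mul_sum]

open Finset in
theorem stmt_4 {d : ℕ} (T : ℕ) (X : Set (EuclideanSpace ℝ (Fin d))) (hX : Convex ℝ X)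
    (f : ℕ → EuclideanSpace ℝ (Fin d) → ℝ)
    (v x u : ℕ → EuclideanSpace ℝ (Fin d))
    (lam γ : ℝ) (hlam : 0 < lam) (hγ : γ = lam / (lam + Real.sqrt lam))
    (hu : ∀ t ≤ T, u t ∈ X)
    (hvX : ∀ t ∈ Icc 1 T, v t ∈ X)
    (hconv : ∀ t ∈ Icc 1 T, ConvexOn ℝ X (f t))
    (hnonneg : ∀ t ∈ Icc 1 T, ∀ y ∈ X, 0 ≤ f t y)
    (hmin : ∀ t ∈ Icc 1 T, ∀ y ∈ X, f t (v t) ≤ f t y)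
    (hqg : ∀ t ∈ Icc 1 T, ∀ y ∈ X, f t y - f t (v t) ≥ lam / 2 * ‖y - v t‖ ^ 2)
    (hxX : ∀ t ∈ Icc 1 T, x t ∈ X)
    (hgreedy : ∀ t ∈ Icc 1 T, ∀ y ∈ X,
      f t (x t) + γ / 2 * ‖x t - x (t - 1)‖ ^ 2 ≤ f t y + γ / 2 * ‖y - x (t - 1)‖ ^ 2)
    (hx0 : x 0 = u 0) :
    ∑ t ∈ Icc 1 T, (f t (x t) + 1 / 2 * ‖x t - x (t - 1)‖ ^ 2) ≤
      (1 + 2 / Real.sqrt lam) *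
        ∑ t ∈ Icc 1 T, (f t (u t) + 1 / 2 * ‖u t - u (t - 1)‖ ^ 2) :=
  stmt_4_general T X f v x u lam γ hlam hγ hu hvX hconv hnonneg hqg hxX hgreedy hx0
end

section
/- Let each f_t : X → ℝ be α-polyhedral with minimizer v_t and nonnegative. With x_t = v_t and x_0 = u_0, the total cost satisfies: Σ_{t=1}^T (f_t(x_t) + ‖x_t - x_{t-1}‖) ≤ (2/α)Σ_{t=1}^T f_t(u_t) + Σ_{t=1}^T ‖u_t - u_{t-1}‖ + Σ_{t=1}^T (1 - 2/α) f_t(x_t), for any u_0, …, u_T ∈ X. -/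
/-! Polyhedrality at `y = u t` gives `α ‖x t - u t‖ ≤ f t (u t) - f t (x t)`. Moving from
`x (t-1)` to `u (t-1)`, along `u`, and then to `x t` bounds the movement cost of `x` by that of
`u` plus twice the total deviation `∑ ‖x t - u t‖` (the deviation at time `0` vanishes), and
this deviation is at most `(1/α) ∑ (f t (u t) - f t (x t))`. -/

open Finset

theorem Finset.sum_Icc_one_comp_pred_add {M : Type*} [AddCommMonoid M] (h : ℕ → M) (T : ℕ) :
    ∑ t ∈ Icc 1 T, h (t - 1) + h T = h 0 + ∑ t ∈ Icc 1 T, h t := by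
  induction T with
  | zero => simp [add_comm]
  | succ n ih =>
    rw [sum_Icc_succ_top (by omega), sum_Icc_succ_top (by omega), Nat.add_sub_cancel,
      ← add_assoc, ← ih]

theorem sum_Icc_norm_sub_pred_le {E : Type*} [SeminormedAddCommGroup E] (x u : ℕ → E)
    (h0 : x 0 = u 0) (T : ℕ) :
    ∑ t ∈ Icc 1 T, ‖x t - x (t - 1)‖ ≤
      ∑ t ∈ Icc 1 T, ‖u t - u (t - 1)‖ + 2 * ∑ t ∈ Icc 1 T, ‖x t - u t‖ := by
  have step : ∀ t ∈ Icc 1 T, ‖x t - x (t - 1)‖ ≤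
      ‖x t - u t‖ + ‖u t - u (t - 1)‖ + ‖x (t - 1) - u (t - 1)‖ := fun t _ =>
    calc ‖x t - x (t - 1)‖ ≤ ‖x t - u t‖ + ‖u t - x (t - 1)‖ :=
          norm_sub_le_norm_sub_add_norm_sub _ _ _
      _ ≤ ‖x t - u t‖ + (‖u t - u (t - 1)‖ + ‖u (t - 1) - x (t - 1)‖) := by
        gcongr; exact norm_sub_le_norm_sub_add_norm_sub _ _ _
      _ = _ := by rw [norm_sub_rev (u (t - 1)), add_assoc]
  have shift := sum_Icc_one_comp_pred_add (fun t => ‖x t - u t‖) T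
  simp only [h0, sub_self, norm_zero, zero_add] at shift
  have := sum_le_sum step
  simp only [sum_add_distrib] at this
  linarith [norm_nonneg (x T - u T)]

theorem stmt_6_general {d : ℕ} (T : ℕ) (X : Set (EuclideanSpace ℝ (Fin d)))
    (f : ℕ → EuclideanSpace ℝ (Fin d) → ℝ)
    (v x u : ℕ → EuclideanSpace ℝ (Fin d))
    (α : ℝ) (hα : 0 < α)
    (hu : ∀ t ≤ T, u t ∈ X)
    (hpoly : ∀ t ∈ Icc 1 T, ∀ y ∈ X, f t y - f t (v t) ≥ α * ‖y - v t‖)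
    (hx : ∀ t ∈ Icc 1 T, x t = v t)
    (hx0 : x 0 = u 0) :
    ∑ t ∈ Icc 1 T, (f t (x t) + ‖x t - x (t - 1)‖) ≤
      (2 / α) * ∑ t ∈ Icc 1 T, f t (u t) + ∑ t ∈ Icc 1 T, ‖u t - u (t - 1)‖ +
        ∑ t ∈ Icc 1 T, (1 - 2 / α) * f t (x t) := by
  have dist_le : α * ∑ t ∈ Icc 1 T, ‖x t - u t‖ ≤
      ∑ t ∈ Icc 1 T, f t (u t) - ∑ t ∈ Icc 1 T, f t (x t) := by
    rw [mul_sum, ← sum_sub_distrib]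
    refine sum_le_sum fun t ht => ?_
    rw [hx t ht, norm_sub_rev]
    exact hpoly t ht (u t) (hu t (mem_Icc.mp ht).2)
  have twice_dist_le : 2 * ∑ t ∈ Icc 1 T, ‖x t - u t‖ ≤
      2 / α * (∑ t ∈ Icc 1 T, f t (u t) - ∑ t ∈ Icc 1 T, f t (x t)) := by
    rw [div_mul_eq_mul_div, le_div_iff₀ hα]; linarith
  rw [sum_add_distrib, ← mul_sum]
  linarith [sum_Icc_norm_sub_pred_le x u hx0 T]

open Finset in
theorem stmt_6 {d : ℕ} (T : ℕ) (X : Set (EuclideanSpace ℝ (Fin d)))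
    (f : ℕ → EuclideanSpace ℝ (Fin d) → ℝ)
    (v x u : ℕ → EuclideanSpace ℝ (Fin d))
    (α : ℝ) (hα : 0 < α)
    (hu : ∀ t ≤ T, u t ∈ X)
    (hvX : ∀ t ∈ Icc 1 T, v t ∈ X)
    (hnonneg : ∀ t ∈ Icc 1 T, ∀ y ∈ X, 0 ≤ f t y)
    (hmin : ∀ t ∈ Icc 1 T, ∀ y ∈ X, f t (v t) ≤ f t y)
    (hpoly : ∀ t ∈ Icc 1 T, ∀ y ∈ X, f t y - f t (v t) ≥ α * ‖y - v t‖)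
    (hx : ∀ t ∈ Icc 1 T, x t = v t)
    (hx0 : x 0 = u 0) :
    ∑ t ∈ Icc 1 T, (f t (x t) + ‖x t - x (t - 1)‖) ≤
      (2 / α) * ∑ t ∈ Icc 1 T, f t (u t) + ∑ t ∈ Icc 1 T, ‖u t - u (t - 1)‖ +
        ∑ t ∈ Icc 1 T, (1 - 2 / α) * f t (x t) :=
  stmt_6_general T X f v x u α hα hu hpoly hx hx0
end

section
/- If α ≥ 2 and each f_t is nonnegative α-polyhedral with minimizer v_t, then playing x_t = v_t (with x_0 = u_0) achieves a competitive ratio of 1: Σ_{t=1}^T (f_t(x_t) + ‖x_t - x_{t-1}‖) ≤ Σ_{t=1}^T (f_t(u_t) + ‖u_t - u_{t-1}‖) for all u_0, …, u_T ∈ X. -/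
/-!
Potential argument with potential `dist (u t) (x t)`. By the triangle inequality through `u t`
and `u (t-1)`, the online move costs at most the comparator's move plus the old potential plus
`dist (u t) (x t)`; restoring the new potential costs `dist (u t) (x t)` once more. Since `x t`
is the minimizer and `α ≥ 2`, the comparator's excess hitting cost pays for both.
-/

open Finset

section TotalCost

variable {E : Type*} [PseudoMetricSpace E]

noncomputable def totalCost (f : ℕ → E → ℝ) (x : ℕ → E) (n : ℕ) : ℝ :=
  ∑ t ∈ Icc 1 n, (f t (x t) + dist (x t) (x (t - 1)))

theorem totalCost_zero (f : ℕ → E → ℝ) (x : ℕ → E) : totalCost f x 0 = 0 := by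
  simp [totalCost]

theorem totalCost_succ (f : ℕ → E → ℝ) (x : ℕ → E) (n : ℕ) :
    totalCost f x (n + 1) = totalCost f x n + (f (n + 1) (x (n + 1)) + dist (x (n + 1)) (x n)) := by
  rw [totalCost, sum_Icc_succ_top (by omega), Nat.add_sub_cancel, totalCost]

theorem dist_step_add_dist_le (a a' b b' : E) :
    dist a' a + dist b' a' ≤ dist b' b + dist b a + 2 * dist b' a' := by
  have := dist_triangle4 a' b' b a
  rw [dist_comm a' b'] at this
  linarith

theorem totalCost_add_dist_le_of_two_mul_dist_le {f : ℕ → E → ℝ} {x u : ℕ → E} (h0 : x 0 = u 0)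
    {n : ℕ} (hgap : ∀ t ∈ Icc 1 n, 2 * dist (u t) (x t) ≤ f t (u t) - f t (x t)) :
    totalCost f x n + dist (u n) (x n) ≤ totalCost f u n := by
  induction n with
  | zero => simp [totalCost_zero, h0]
  | succ n ih =>
    have hstep := dist_step_add_dist_le (x n) (x (n + 1)) (u n) (u (n + 1))
    have hgap_last := hgap (n + 1) (by simp)
    have ih := ih fun t ht => hgap t (Icc_subset_Icc_right n.le_succ ht)
    rw [totalCost_succ, totalCost_succ]
    linarith

theorem totalCost_le_of_two_mul_dist_le {f : ℕ → E → ℝ} {x u : ℕ → E} (h0 : x 0 = u 0)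
    {n : ℕ} (hgap : ∀ t ∈ Icc 1 n, 2 * dist (u t) (x t) ≤ f t (u t) - f t (x t)) :
    totalCost f x n ≤ totalCost f u n :=
  (le_add_of_nonneg_right dist_nonneg).trans (totalCost_add_dist_le_of_two_mul_dist_le h0 hgap)

end TotalCost

open Finset in
theorem stmt_7_general {d : ℕ} (T : ℕ) (X : Set (EuclideanSpace ℝ (Fin d)))
    (f : ℕ → EuclideanSpace ℝ (Fin d) → ℝ)
    (v x u : ℕ → EuclideanSpace ℝ (Fin d))
    (α : ℝ) (hα : 2 ≤ α)
    (hu : ∀ t ≤ T, u t ∈ X)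
    (hpoly : ∀ t ∈ Icc 1 T, ∀ y ∈ X, f t y - f t (v t) ≥ α * ‖y - v t‖)
    (hx : ∀ t ∈ Icc 1 T, x t = v t)
    (hx0 : x 0 = u 0) :
    ∑ t ∈ Icc 1 T, (f t (x t) + ‖x t - x (t - 1)‖) ≤
      ∑ t ∈ Icc 1 T, (f t (u t) + ‖u t - u (t - 1)‖) := by
  simp only [← dist_eq_norm]
  change totalCost f x T ≤ totalCost f u T
  refine totalCost_le_of_two_mul_dist_le hx0 fun t ht => ?_
  have hpoly_t := hpoly t ht (u t) (hu t (mem_Icc.1 ht).2)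
  rw [hx t ht, dist_eq_norm]
  nlinarith [norm_nonneg (u t - v t)]

open Finset in
theorem stmt_7 {d : ℕ} (T : ℕ) (X : Set (EuclideanSpace ℝ (Fin d)))
    (f : ℕ → EuclideanSpace ℝ (Fin d) → ℝ)
    (v x u : ℕ → EuclideanSpace ℝ (Fin d))
    (α : ℝ) (hα : 2 ≤ α)
    (hu : ∀ t ≤ T, u t ∈ X)
    (hvX : ∀ t ∈ Icc 1 T, v t ∈ X)
    (hnonneg : ∀ t ∈ Icc 1 T, ∀ y ∈ X, 0 ≤ f t y)
    (hmin : ∀ t ∈ Icc 1 T, ∀ y ∈ X, f t (v t) ≤ f t y)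
    (hpoly : ∀ t ∈ Icc 1 T, ∀ y ∈ X, f t y - f t (v t) ≥ α * ‖y - v t‖)
    (hx : ∀ t ∈ Icc 1 T, x t = v t)
    (hx0 : x 0 = u 0) :
    ∑ t ∈ Icc 1 T, (f t (x t) + ‖x t - x (t - 1)‖) ≤
      ∑ t ∈ Icc 1 T, (f t (u t) + ‖u t - u (t - 1)‖) :=
  stmt_7_general T X f v x u α hα hu hpoly hx hx0
end

section
/- Let X ⊆ ℝ^d be convex with diameter ≤ D, each f_t convex. For step size η > 0, let x_t^η = argmin_{x∈X}(f_t(x) + (1/(2η))‖x - x_{t-1}^η‖²). Then for any u_0, u_1, …, u_T ∈ X: Σ_{t=1}^T f_t(x_t^η) - Σ_{t=1}^T f_t(u_t) ≤ D²/(2η) + (D/η)Σ_{t=1}^T ‖u_t - u_{t-1}‖ - (1/(2η))Σ_{t=1}^T ‖x_t^η - x_{t-1}^η‖². -/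
/-!
Each step minimizes `f_t + ‖· - x_{t-1}‖² / (2η)`, a `1/η`-strongly convex function, so comparing
with `u_t` gives `f_t(x_t) - f_t(u_t) ≤ (‖u_t - x_{t-1}‖² - ‖x_t - x_{t-1}‖² - ‖u_t - x_t‖²) / (2η)`.
Replacing `u_t` by `u_{t-1}` in the first term costs at most `2D‖u_t - u_{t-1}‖`, after which the
potentials `‖u_t - x_t‖²` telescope, leaving `‖u_0 - x_0‖² ≤ D²`.
-/

open Finset Filter Topology

open scoped RealInnerProductSpace

section StrongConvexity

variable {E : Type*} [NormedAddCommGroup E]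

lemma StrongConvexOn.add_sq_norm_sub_le_of_isMinOn [NormedSpace ℝ E] {s : Set E} {m : ℝ}
    {f : E → ℝ} {a v : E} (hf : StrongConvexOn s m f) (ha : a ∈ s) (hmin : IsMinOn f s a)
    (hv : v ∈ s) : f a + m / 2 * ‖v - a‖ ^ 2 ≤ f v := by
  -- Compare `a` with the points `(1 - l) • a + l • v` and let `l → 0⁺`.
  have hsegment : ∀ l : ℝ, 0 < l → l ≤ 1 → f a + (1 - l) * (m / 2 * ‖v - a‖ ^ 2) ≤ f v := by
    intro l hl0 hl1
    have hconv := hf.2 ha hv (sub_nonneg.2 hl1) hl0.le (sub_add_cancel 1 l)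
    have hle : f a ≤ f ((1 - l) • a + l • v) :=
      hmin (hf.1 ha hv (sub_nonneg.2 hl1) hl0.le (sub_add_cancel 1 l))
    simp only [smul_eq_mul, norm_sub_rev a v] at hconv
    have hscaled : l * (f a + (1 - l) * (m / 2 * ‖v - a‖ ^ 2)) ≤ l * f v := by linarith
    exact le_of_mul_le_mul_left hscaled hl0
  have hlim : Tendsto (fun l : ℝ ↦ f a + (1 - l) * (m / 2 * ‖v - a‖ ^ 2)) (𝓝[>] 0)
      (𝓝 (f a + m / 2 * ‖v - a‖ ^ 2)) := by
    have hcont : Continuous fun l : ℝ ↦ f a + (1 - l) * (m / 2 * ‖v - a‖ ^ 2) := by fun_prop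
    simpa using (hcont.tendsto 0).mono_left nhdsWithin_le_nhds
  refine le_of_tendsto hlim ?_
  filter_upwards [Ioc_mem_nhdsGT (zero_lt_one' ℝ)] with l hl using hsegment l hl.1 hl.2

lemma ConvexOn.strongConvexOn_add_mul_sq_norm_sub [InnerProductSpace ℝ E] {s : Set E}
    {g : E → ℝ} (hg : ConvexOn ℝ s g) (c : ℝ) (b : E) :
    StrongConvexOn s (2 * c) fun y ↦ g y + c * ‖y - b‖ ^ 2 := by
  rw [strongConvexOn_iff_convex]
  have haffine : ConvexOn ℝ s fun y ↦ c * (‖b‖ ^ 2 - 2 * ⟪y, b⟫) := by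
    refine ⟨hg.1, fun x _ y _ p q _ _ hpq ↦ le_of_eq ?_⟩
    simp only [smul_eq_mul, inner_add_left, real_inner_smul_left]
    linear_combination (-(c * ‖b‖ ^ 2)) * hpq
  refine (hg.add haffine).congr fun y _ ↦ ?_
  simp only [Pi.add_apply, norm_sub_sq_real]
  ring

/-- The three-point inequality of a proximal step. -/
lemma ConvexOn.sub_le_of_isMinOn_add_mul_sq_norm_sub [InnerProductSpace ℝ E] {s : Set E}
    {g : E → ℝ} {c : ℝ} {a b v : E} (hg : ConvexOn ℝ s g) (ha : a ∈ s)
    (hmin : IsMinOn (fun y ↦ g y + c * ‖y - b‖ ^ 2) s a) (hv : v ∈ s) :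
    g a - g v ≤ c * (‖v - b‖ ^ 2 - ‖a - b‖ ^ 2 - ‖v - a‖ ^ 2) := by
  have := (hg.strongConvexOn_add_mul_sq_norm_sub c b).add_sq_norm_sub_le_of_isMinOn ha hmin hv
  linarith

end StrongConvexity

lemma sq_norm_sub_sq_norm_le {E : Type*} [SeminormedAddCommGroup E] {p q : E} {D : ℝ}
    (hp : ‖p‖ ≤ D) (hq : ‖q‖ ≤ D) : ‖p‖ ^ 2 - ‖q‖ ^ 2 ≤ 2 * D * ‖p - q‖ := by
  have hdiff : ‖p‖ - ‖q‖ ≤ ‖p - q‖ := norm_sub_norm_le p q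
  nlinarith [norm_nonneg p, norm_nonneg q, norm_nonneg (p - q)]

lemma Finset.sum_Icc_le_sub_add_sum_of_le {a b φ : ℕ → ℝ} {T : ℕ}
    (h : ∀ t ∈ Icc 1 T, a t ≤ φ (t - 1) - φ t + b t) :
    ∑ t ∈ Icc 1 T, a t ≤ φ 0 - φ T + ∑ t ∈ Icc 1 T, b t := by
  induction T with
  | zero => simp
  | succ T ih =>
    have hprev := ih fun t ht ↦ h t (Icc_subset_Icc_right T.le_succ ht)
    have hlast := h (T + 1) (right_mem_Icc.2 (Nat.le_add_left 1 T))
    rw [sum_Icc_succ_top (Nat.le_add_left 1 T), sum_Icc_succ_top (Nat.le_add_left 1 T)]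
    rw [Nat.add_sub_cancel] at hlast
    linarith

open Finset in
theorem stmt_11_general {d : ℕ} (T : ℕ) (X : Set (EuclideanSpace ℝ (Fin d)))
    (D : ℝ) (hD : ∀ a ∈ X, ∀ b ∈ X, ‖a - b‖ ≤ D)
    (f : ℕ → EuclideanSpace ℝ (Fin d) → ℝ)
    (hconv : ∀ t ∈ Icc 1 T, ConvexOn ℝ X (f t))
    (η : ℝ) (hη : 0 < η)
    (x u : ℕ → EuclideanSpace ℝ (Fin d))
    (hx0 : x 0 ∈ X) (hxX : ∀ t ∈ Icc 1 T, x t ∈ X)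
    (hu : ∀ t ≤ T, u t ∈ X)
    (hgreedy : ∀ t ∈ Icc 1 T, ∀ y ∈ X,
      f t (x t) + 1 / (2 * η) * ‖x t - x (t - 1)‖ ^ 2 ≤
        f t y + 1 / (2 * η) * ‖y - x (t - 1)‖ ^ 2) :
    ∑ t ∈ Icc 1 T, f t (x t) - ∑ t ∈ Icc 1 T, f t (u t) ≤
      D ^ 2 / (2 * η) + (D / η) * ∑ t ∈ Icc 1 T, ‖u t - u (t - 1)‖ -
        1 / (2 * η) * ∑ t ∈ Icc 1 T, ‖x t - x (t - 1)‖ ^ 2 := by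
  set c := 1 / (2 * η)
  have hc : 0 < c := by positivity
  have hx : ∀ t ≤ T, x t ∈ X := by
    intro t ht
    rcases t.eq_zero_or_pos with rfl | hpos
    exacts [hx0, hxX t (mem_Icc.2 ⟨hpos, ht⟩)]
  have hstep : ∀ t ∈ Icc 1 T, f t (x t) - f t (u t) ≤
      c * ‖u (t - 1) - x (t - 1)‖ ^ 2 - c * ‖u t - x t‖ ^ 2 +
        ((D / η) * ‖u t - u (t - 1)‖ - c * ‖x t - x (t - 1)‖ ^ 2) := by
    intro t ht
    have hT := (mem_Icc.1 ht).2
    have hT' : t - 1 ≤ T := (t.sub_le 1).trans hT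
    have hprox := (hconv t ht).sub_le_of_isMinOn_add_mul_sq_norm_sub (hxX t ht)
      (hgreedy t ht) (hu t hT)
    have hmove := sq_norm_sub_sq_norm_le (hD _ (hu t hT) _ (hx _ hT'))
      (hD _ (hu _ hT') _ (hx _ hT'))
    rw [sub_sub_sub_cancel_right] at hmove
    have hDη : D / η = c * (2 * D) := by simp only [c]; field_simp
    rw [hDη]
    linarith [mul_le_mul_of_nonneg_left hmove hc.le]
  have hsum := sum_Icc_le_sub_add_sum_of_le (φ := fun s ↦ c * ‖u s - x s‖ ^ 2) hstep
  have hu0 : ‖u 0 - x 0‖ ^ 2 ≤ D ^ 2 :=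
    pow_le_pow_left₀ (norm_nonneg _) (hD _ (hu 0 T.zero_le) _ hx0) 2
  rw [sum_sub_distrib, sum_sub_distrib, ← mul_sum, ← mul_sum] at hsum
  have hD2η : D ^ 2 / (2 * η) = c * D ^ 2 := by simp only [c]; ring
  rw [hD2η]
  linarith [mul_le_mul_of_nonneg_left hu0 hc.le, mul_nonneg hc.le (sq_nonneg ‖u T - x T‖)]

open Finset in
theorem stmt_11 {d : ℕ} (T : ℕ) (X : Set (EuclideanSpace ℝ (Fin d))) (hX : Convex ℝ X)
    (D : ℝ) (hD : ∀ a ∈ X, ∀ b ∈ X, ‖a - b‖ ≤ D)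
    (f : ℕ → EuclideanSpace ℝ (Fin d) → ℝ)
    (hconv : ∀ t ∈ Icc 1 T, ConvexOn ℝ X (f t))
    (η : ℝ) (hη : 0 < η)
    (x u : ℕ → EuclideanSpace ℝ (Fin d))
    (hx0 : x 0 ∈ X) (hxX : ∀ t ∈ Icc 1 T, x t ∈ X)
    (hu : ∀ t ≤ T, u t ∈ X)
    (hgreedy : ∀ t ∈ Icc 1 T, ∀ y ∈ X,
      f t (x t) + 1 / (2 * η) * ‖x t - x (t - 1)‖ ^ 2 ≤
        f t y + 1 / (2 * η) * ‖y - x (t - 1)‖ ^ 2) :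
    ∑ t ∈ Icc 1 T, f t (x t) - ∑ t ∈ Icc 1 T, f t (u t) ≤
      D ^ 2 / (2 * η) + (D / η) * ∑ t ∈ Icc 1 T, ‖u t - u (t - 1)‖ -
        1 / (2 * η) * ∑ t ∈ Icc 1 T, ‖x t - x (t - 1)‖ ^ 2 :=
  stmt_11_general T X D hD f hconv η hη x u hx0 hxX hu hgreedy
end

section
/- Under the setting of the previous lemma (convex f_t on convex X with diameter D, implicit updates x_t^η), the dynamic regret with switching cost satisfies: Σ_{t=1}^T (f_t(x_t^η) + ‖x_t^η - x_{t-1}^η‖) - Σ_{t=1}^T f_t(u_t) ≤ D²/(2η) + (D/η)Σ_{t=1}^T ‖u_t - u_{t-1}‖ + ηT/2, for any u_0, …, u_T ∈ X. -/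
/-!
The objective of the implicit update is `(1/η)`-strongly convex, so its minimiser `x_t` satisfies
the three-point inequality
`f_t(x_t) + ‖x_t - x_{t-1}‖²/(2η) + ‖u_t - x_t‖²/(2η) ≤ f_t(u_t) + ‖u_t - x_{t-1}‖²/(2η)`.
Replacing `u_t` by `u_{t-1}` on the right costs at most `(D/η)‖u_t - u_{t-1}‖`, AM-GM trades the
squared movement for the linear switching cost at the price `η/2`, and the potential
`‖u_t - x_t‖²/(2η)` telescopes to at most `D²/(2η)`.
-/

open Filter Topology

lemma Finset.sum_Icc_sub_telescope (g : ℕ → ℝ) (T : ℕ) :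
    ∑ t ∈ Finset.Icc 1 T, (g (t - 1) - g t) = g 0 - g T := by
  induction T with
  | zero => simp
  | succ n ih =>
    rw [Finset.sum_Icc_succ_top (by omega), ih, Nat.add_sub_cancel]
    ring

lemma le_half_add_sq_div {η : ℝ} (hη : 0 < η) (r : ℝ) : r ≤ η / 2 + r ^ 2 / (2 * η) := by
  rw [div_add_div _ _ two_ne_zero (by positivity), le_div_iff₀ (by positivity)]
  nlinarith [two_mul_le_add_sq η r]

lemma sq_norm_sub_le_sq_norm_sub_add {E : Type*} [SeminormedAddCommGroup E] {u u' p : E} {D : ℝ}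
    (hu : ‖u - p‖ ≤ D) (hu' : ‖u' - p‖ ≤ D) :
    ‖u - p‖ ^ 2 ≤ ‖u' - p‖ ^ 2 + 2 * D * ‖u - u'‖ := by
  have htri : ‖u - p‖ ≤ ‖u' - p‖ + ‖u - u'‖ := by
    simpa [add_comm] using norm_sub_le_norm_sub_add_norm_sub u u' p
  nlinarith [norm_nonneg (u - p), norm_nonneg (u' - p), norm_nonneg (u - u')]

section InnerProductSpace

variable {E : Type*} [NormedAddCommGroup E] [InnerProductSpace ℝ E]

lemma strongConvexOn_mul_norm_sub_sq {s : Set E} (hs : Convex ℝ s) (m : ℝ) (c : E) :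
    StrongConvexOn s m fun y ↦ m / 2 * ‖y - c‖ ^ 2 := by
  refine ⟨hs, fun x _ y _ a b ha hb hab ↦ ?_⟩
  obtain rfl : b = 1 - a := eq_sub_of_add_eq' hab
  have hsplit : a • x + (1 - a) • y - c = a • (x - c) + (1 - a) • (y - c) := by module
  have hdiff : x - y = (x - c) - (y - c) := by abel
  show m / 2 * ‖a • x + (1 - a) • y - c‖ ^ 2 ≤ a * (m / 2 * ‖x - c‖ ^ 2)
    + (1 - a) * (m / 2 * ‖y - c‖ ^ 2) - a * (1 - a) * (m / 2 * ‖x - y‖ ^ 2)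
  rw [hsplit, hdiff]
  generalize x - c = p, y - c = q
  rw [norm_add_sq_real, norm_sub_sq_real, norm_smul, norm_smul, real_inner_smul_left,
    real_inner_smul_right, Real.norm_of_nonneg ha, Real.norm_of_nonneg hb]
  exact le_of_eq (by ring)

lemma ConvexOn.strongConvexOn_add_mul_norm_sub_sq {s : Set E} {f : E → ℝ} (hf : ConvexOn ℝ s f)
    (m : ℝ) (c : E) : StrongConvexOn s m fun y ↦ f y + m / 2 * ‖y - c‖ ^ 2 := by
  have := (uniformConvexOn_zero.2 hf).add (strongConvexOn_mul_norm_sub_sq hf.1 m c)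
  rwa [zero_add] at this

lemma StrongConvexOn.add_mul_norm_sub_sq_le_of_isMinOn {s : Set E} {m : ℝ} {f : E → ℝ} {x y : E}
    (hf : StrongConvexOn s m f) (hmin : IsMinOn f s x) (hx : x ∈ s) (hy : y ∈ s) :
    f x + m / 2 * ‖y - x‖ ^ 2 ≤ f y := by
  have hsegment : ∀ θ ∈ Set.Ioc (0 : ℝ) 1, f x + (1 - θ) * (m / 2 * ‖y - x‖ ^ 2) ≤ f y := by
    rintro θ ⟨hθ0, hθ1⟩
    have hz := hf.2 hx hy (sub_nonneg.2 hθ1) hθ0.le (sub_add_cancel 1 θ)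
    have hmin_z := isMinOn_iff.1 hmin _
      (hf.1 hx hy (sub_nonneg.2 hθ1) hθ0.le (sub_add_cancel 1 θ))
    rw [norm_sub_rev] at hz
    simp only [smul_eq_mul] at hz
    have : θ * (f x + (1 - θ) * (m / 2 * ‖y - x‖ ^ 2)) ≤ θ * f y := by linarith
    exact le_of_mul_le_mul_left this hθ0
  have hlim : Tendsto (fun θ : ℝ ↦ f x + (1 - θ) * (m / 2 * ‖y - x‖ ^ 2)) (𝓝[>] 0)
      (𝓝 (f x + m / 2 * ‖y - x‖ ^ 2)) := by
    have : Continuous (fun θ : ℝ ↦ f x + (1 - θ) * (m / 2 * ‖y - x‖ ^ 2)) := by fun_prop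
    simpa using (this.tendsto 0).mono_left nhdsWithin_le_nhds
  refine le_of_tendsto hlim ?_
  filter_upwards [Ioc_mem_nhdsGT one_pos] using hsegment

lemma ConvexOn.proximal_step_regret_le {s : Set E} {f : E → ℝ} (hf : ConvexOn ℝ s f)
    {η D : ℝ} (hη : 0 < η) (hD : ∀ a ∈ s, ∀ b ∈ s, ‖a - b‖ ≤ D) {x' x u' u : E}
    (hx' : x' ∈ s) (hx : x ∈ s) (hu' : u' ∈ s) (hu : u ∈ s)
    (hmin : ∀ y ∈ s, f x + 1 / (2 * η) * ‖x - x'‖ ^ 2 ≤ f y + 1 / (2 * η) * ‖y - x'‖ ^ 2) :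
    f x + ‖x - x'‖ - f u ≤
      η / 2 + D / η * ‖u - u'‖ + 1 / (2 * η) * (‖u' - x'‖ ^ 2 - ‖u - x‖ ^ 2) := by
  have hhalf : 2 * (1 / (2 * η)) / 2 = 1 / (2 * η) := by ring
  have hthree := (hf.strongConvexOn_add_mul_norm_sub_sq (2 * (1 / (2 * η))) x'
    ).add_mul_norm_sub_sq_le_of_isMinOn (isMinOn_iff.2 (by simpa only [hhalf] using hmin)) hx hu
  simp only [hhalf] at hthree
  have hamgm := le_half_add_sq_div hη ‖x - x'‖
  have hmove := mul_le_mul_of_nonneg_left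
    (sq_norm_sub_le_sq_norm_sub_add (hD u hu x' hx') (hD u' hu' x' hx'))
    (show 0 ≤ 1 / (2 * η) by positivity)
  have hDη : 1 / (2 * η) * (2 * D * ‖u - u'‖) = D / η * ‖u - u'‖ := by field_simp
  linarith [show ‖x - x'‖ ^ 2 / (2 * η) = 1 / (2 * η) * ‖x - x'‖ ^ 2 by ring]
end InnerProductSpace

open Finset in
theorem stmt_12_general {d : ℕ} (T : ℕ) (X : Set (EuclideanSpace ℝ (Fin d)))
    (D : ℝ) (hD : ∀ a ∈ X, ∀ b ∈ X, ‖a - b‖ ≤ D)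
    (f : ℕ → EuclideanSpace ℝ (Fin d) → ℝ)
    (hconv : ∀ t ∈ Icc 1 T, ConvexOn ℝ X (f t))
    (η : ℝ) (hη : 0 < η)
    (x u : ℕ → EuclideanSpace ℝ (Fin d))
    (hx0 : x 0 ∈ X) (hxX : ∀ t ∈ Icc 1 T, x t ∈ X)
    (hu : ∀ t ≤ T, u t ∈ X)
    (hgreedy : ∀ t ∈ Icc 1 T, ∀ y ∈ X,
      f t (x t) + 1 / (2 * η) * ‖x t - x (t - 1)‖ ^ 2 ≤
        f t y + 1 / (2 * η) * ‖y - x (t - 1)‖ ^ 2) :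
    ∑ t ∈ Icc 1 T, (f t (x t) + ‖x t - x (t - 1)‖) - ∑ t ∈ Icc 1 T, f t (u t) ≤
      D ^ 2 / (2 * η) + (D / η) * ∑ t ∈ Icc 1 T, ‖u t - u (t - 1)‖ + η * T / 2 := by
  set g : ℕ → ℝ := fun t ↦ ‖u t - x t‖ ^ 2
  have hprev : ∀ t ∈ Icc 1 T, x (t - 1) ∈ X := by
    intro t ht
    rcases Nat.lt_or_ge 1 t with h | h
    · exact hxX _ (mem_Icc.2 ⟨by omega, by have := (mem_Icc.1 ht).2; omega⟩)
    · rwa [show t - 1 = 0 by omega]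
  have hstep (t : ℕ) (ht : t ∈ Icc 1 T) := (hconv t ht).proximal_step_regret_le hη hD
    (hprev t ht) (hxX t ht) (hu (t - 1) (by have := (mem_Icc.1 ht).2; omega))
    (hu t (mem_Icc.1 ht).2) (hgreedy t ht)
  have hg0 : g 0 ≤ D ^ 2 := pow_le_pow_left₀ (norm_nonneg _) (hD _ (hu 0 T.zero_le) _ hx0) 2
  have hgT : 0 ≤ g T := by positivity
  calc ∑ t ∈ Icc 1 T, (f t (x t) + ‖x t - x (t - 1)‖) - ∑ t ∈ Icc 1 T, f t (u t)
      = ∑ t ∈ Icc 1 T, (f t (x t) + ‖x t - x (t - 1)‖ - f t (u t)) := (sum_sub_distrib _ _).symm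
    _ ≤ ∑ t ∈ Icc 1 T, (η / 2 + D / η * ‖u t - u (t - 1)‖ + 1 / (2 * η) * (g (t - 1) - g t)) :=
      sum_le_sum hstep
    _ = T * (η / 2) + D / η * ∑ t ∈ Icc 1 T, ‖u t - u (t - 1)‖ + 1 / (2 * η) * (g 0 - g T) := by
      rw [sum_add_distrib, sum_add_distrib, ← mul_sum, ← mul_sum, sum_Icc_sub_telescope,
        sum_const, Nat.card_Icc, nsmul_eq_mul, Nat.add_sub_cancel]
    _ ≤ D ^ 2 / (2 * η) + (D / η) * ∑ t ∈ Icc 1 T, ‖u t - u (t - 1)‖ + η * T / 2 := by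
      have : 1 / (2 * η) * (g 0 - g T) ≤ 1 / (2 * η) * D ^ 2 := by gcongr; linarith
      linarith [show 1 / (2 * η) * D ^ 2 = D ^ 2 / (2 * η) by ring]

open Finset in
theorem stmt_12 {d : ℕ} (T : ℕ) (X : Set (EuclideanSpace ℝ (Fin d))) (hX : Convex ℝ X)
    (D : ℝ) (hD : ∀ a ∈ X, ∀ b ∈ X, ‖a - b‖ ≤ D)
    (f : ℕ → EuclideanSpace ℝ (Fin d) → ℝ)
    (hconv : ∀ t ∈ Icc 1 T, ConvexOn ℝ X (f t))
    (η : ℝ) (hη : 0 < η)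
    (x u : ℕ → EuclideanSpace ℝ (Fin d))
    (hx0 : x 0 ∈ X) (hxX : ∀ t ∈ Icc 1 T, x t ∈ X)
    (hu : ∀ t ≤ T, u t ∈ X)
    (hgreedy : ∀ t ∈ Icc 1 T, ∀ y ∈ X,
      f t (x t) + 1 / (2 * η) * ‖x t - x (t - 1)‖ ^ 2 ≤
        f t y + 1 / (2 * η) * ‖y - x (t - 1)‖ ^ 2) :
    ∑ t ∈ Icc 1 T, (f t (x t) + ‖x t - x (t - 1)‖) - ∑ t ∈ Icc 1 T, f t (u t) ≤
      D ^ 2 / (2 * η) + (D / η) * ∑ t ∈ Icc 1 T, ‖u t - u (t - 1)‖ + η * T / 2 :=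
  stmt_12_general T X D hD f hconv η hη x u hx0 hxX hu hgreedy
end

section
/- Let X ⊆ ℝ^d be convex with diameter ≤ D, f_t convex with ‖∇f_t(x)‖ ≤ G on X, and let x_{t+1}^η = Π_X[x_t^η - η∇f_t(x_t)] be projected online gradient descent on the linearized losses s_t(x) = ⟨∇f_t(x_t), x - x_t⟩. Then for any u_1, …, u_T ∈ X (with u_0 = u_1 convention): Σ_{t=1}^T (s_t(x_t^η) + ‖x_t^η - x_{t-1}^η‖) - Σ_{t=1}^T s_t(u_t) ≤ D²/(2η) + (D/η)Σ_{t=1}^T ‖u_t - u_{t-1}‖ + ηT(G²/2 + G). -/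
/-!
The projection step is a nearest-point map onto a convex set, so it satisfies the variational
inequality `⟪z - p, y - p⟫ ≤ 0` and hence moves `z` closer to every point of `X`. Expanding
`‖x_t - η g_t - u_t‖²` turns this into the per-round bound
`2η ⟪g_t, x_t - u_t⟫ ≤ ‖x_t - u_t‖² - ‖x_{t+1} - u_t‖² + η²G²`. Summing, the right-hand side
telescopes up to the drift terms `‖x_t - u_t‖² - ‖x_t - u_{t-1}‖² ≤ 2D ‖u_t - u_{t-1}‖`.
The switching cost is at most `ηG` per round because `x_t` itself lies in `X`.
-/

open Finset RealInnerProductSpace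

theorem sq_norm_sub_sub_sq_norm_sub_le {E : Type*} [SeminormedAddCommGroup E] {X : Set E} {D : ℝ}
    (hD : ∀ a ∈ X, ∀ b ∈ X, ‖a - b‖ ≤ D) {a b c : E} (ha : a ∈ X) (hb : b ∈ X) (hc : c ∈ X) :
    ‖a - b‖ ^ 2 - ‖a - c‖ ^ 2 ≤ 2 * D * ‖b - c‖ := by
  have hdiff : ‖a - b‖ - ‖a - c‖ ≤ ‖b - c‖ := by
    simpa [norm_sub_rev c b] using norm_sub_norm_le (a - b) (a - c)
  nlinarith [hD a ha b hb, hD a ha c hc, norm_nonneg (a - b), norm_nonneg (a - c),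
    norm_nonneg (b - c)]

variable {E : Type*} [NormedAddCommGroup E] [InnerProductSpace ℝ E] {X : Set E}

theorem real_inner_sub_le_zero_of_isMinOn (hX : Convex ℝ X) {p z y : E} (hp : p ∈ X)
    (hmin : IsMinOn (‖· - z‖) X p) (hy : y ∈ X) : ⟪z - p, y - p⟫ ≤ 0 := by
  have hmin' : IsMinOn (fun w => ‖z - w‖) X p := by
    simpa only [norm_sub_rev z] using hmin
  exact (norm_eq_iInf_iff_real_inner_le_zero hX hp).mp (hmin'.iInf_eq hp).symm y hy

theorem norm_sub_le_of_isMinOn (hX : Convex ℝ X) {p z y : E} (hp : p ∈ X)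
    (hmin : IsMinOn (‖· - z‖) X p) (hy : y ∈ X) : ‖p - y‖ ≤ ‖z - y‖ := by
  have hvi : 0 ≤ ⟪z - p, p - y⟫ := by
    have := real_inner_sub_le_zero_of_isMinOn hX hp hmin hy
    rw [← neg_sub p y, inner_neg_right] at this
    linarith
  have hsq : ‖z - y‖ ^ 2 = ‖z - p‖ ^ 2 + 2 * ⟪z - p, p - y⟫ + ‖p - y‖ ^ 2 := by
    rw [← norm_add_sq_real, sub_add_sub_cancel]
  refine (pow_le_pow_iff_left₀ (norm_nonneg _) (norm_nonneg _) two_ne_zero).mp ?_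
  nlinarith [sq_nonneg ‖z - p‖]

def IsProjectedOGD (X : Set E) (η : ℝ) (g x : ℕ → E) : Prop :=
  ∀ t, IsMinOn (‖· - (x t - η • g t)‖) X (x (t + 1))

namespace IsProjectedOGD

variable {η : ℝ} {g x : ℕ → E}

theorem sq_norm_succ_sub_le (h : IsProjectedOGD X η g x) (hX : Convex ℝ X)
    (hxX : ∀ t, x t ∈ X) (t : ℕ) {u : E} (hu : u ∈ X) :
    ‖x (t + 1) - u‖ ^ 2 ≤ ‖x t - u‖ ^ 2 - 2 * η * ⟪g t, x t - u⟫ + η ^ 2 * ‖g t‖ ^ 2 := by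
  have hclose := norm_sub_le_of_isMinOn hX (hxX (t + 1)) (h t) hu
  have hexp : ‖x t - η • g t - u‖ ^ 2
      = ‖x t - u‖ ^ 2 - 2 * η * ⟪g t, x t - u⟫ + η ^ 2 * ‖g t‖ ^ 2 := by
    rw [sub_right_comm, norm_sub_sq_real, real_inner_smul_right, norm_smul, mul_pow,
      Real.norm_eq_abs, sq_abs, real_inner_comm]
    ring
  rw [← hexp]
  exact pow_le_pow_left₀ (norm_nonneg _) hclose 2

theorem norm_succ_sub_le (h : IsProjectedOGD X η g x) (hX : Convex ℝ X)
    (hxX : ∀ t, x t ∈ X) (t : ℕ) : ‖x (t + 1) - x t‖ ≤ ‖η • g t‖ := by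
  simpa using norm_sub_le_of_isMinOn hX (hxX (t + 1)) (h t) (hxX t)

theorem sum_inner_sub_le (h : IsProjectedOGD X η g x) (hX : Convex ℝ X) (hη : 0 < η) {D G : ℝ}
    (hD : ∀ a ∈ X, ∀ b ∈ X, ‖a - b‖ ≤ D) (hG : ∀ t, ‖g t‖ ≤ G) (hxX : ∀ t, x t ∈ X)
    {u : ℕ → E} {T : ℕ} (hu : ∀ t ≤ T, u t ∈ X) :
    ∑ t ∈ Icc 1 T, ⟪g t, x t - u t⟫ ≤
      D ^ 2 / (2 * η) + D / η * ∑ t ∈ Icc 1 T, ‖u t - u (t - 1)‖ + η * T * G ^ 2 / 2 := by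
  set P : ℕ → ℝ := fun t => ‖x t - u (t - 1)‖ ^ 2 with hP
  have hG2 : ∀ t, ‖g t‖ ^ 2 ≤ G ^ 2 := fun t =>
    pow_le_pow_left₀ (norm_nonneg _) (hG t) 2
  have hstep : ∀ t ∈ Icc 1 T, 2 * η * ⟪g t, x t - u t⟫ ≤
      (‖x t - u t‖ ^ 2 - P t) - (P (t + 1) - P t) + η ^ 2 * G ^ 2 := fun t ht => by
    have := h.sq_norm_succ_sub_le hX hxX t (hu t (mem_Icc.mp ht).2)
    simp only [hP, Nat.add_sub_cancel]
    nlinarith [hG2 t]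
  have hdrift : ∀ t ∈ Icc 1 T, ‖x t - u t‖ ^ 2 - P t ≤ 2 * D * ‖u t - u (t - 1)‖ := fun t ht =>
    sq_norm_sub_sub_sq_norm_sub_le hD (hxX t) (hu t (mem_Icc.mp ht).2) (hu _ (by grind))
  have htel : ∑ t ∈ Icc 1 T, (P (t + 1) - P t) = P (T + 1) - P 1 := by
    rw [← Ico_add_one_right_eq_Icc]
    exact sum_Ico_sub P (by omega)
  have hP1 : P 1 ≤ D ^ 2 :=
    pow_le_pow_left₀ (norm_nonneg _) (hD _ (hxX 1) _ (hu 0 T.zero_le)) 2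
  have hPT : 0 ≤ P (T + 1) := sq_nonneg _
  have hsum : 2 * η * ∑ t ∈ Icc 1 T, ⟪g t, x t - u t⟫ ≤
      ∑ t ∈ Icc 1 T, (‖x t - u t‖ ^ 2 - P t) - ∑ t ∈ Icc 1 T, (P (t + 1) - P t) +
        ∑ _t ∈ Icc 1 T, η ^ 2 * G ^ 2 := by
    rw [mul_sum, ← sum_sub_distrib, ← sum_add_distrib]
    exact sum_le_sum hstep
  have hdrift_sum : ∑ t ∈ Icc 1 T, (‖x t - u t‖ ^ 2 - P t) ≤
      2 * D * ∑ t ∈ Icc 1 T, ‖u t - u (t - 1)‖ := by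
    rw [mul_sum]
    exact sum_le_sum hdrift
  simp only [sum_const, Nat.card_Icc, Nat.add_sub_cancel, nsmul_eq_mul] at hsum
  rw [show D ^ 2 / (2 * η) + D / η * ∑ t ∈ Icc 1 T, ‖u t - u (t - 1)‖ + η * T * G ^ 2 / 2 =
      (D ^ 2 + 2 * D * ∑ t ∈ Icc 1 T, ‖u t - u (t - 1)‖ + T * (η ^ 2 * G ^ 2)) / (2 * η) by
    field_simp, le_div_iff₀ (by positivity)]
  linarith

theorem sum_norm_sub_pred_le (h : IsProjectedOGD X η g x) (hX : Convex ℝ X) (hη : 0 ≤ η)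
    {G : ℝ} (hG : ∀ t, ‖g t‖ ≤ G) (hxX : ∀ t, x t ∈ X) (T : ℕ) :
    ∑ t ∈ Icc 1 T, ‖x t - x (t - 1)‖ ≤ η * T * G := by
  have hstep : ∀ t ∈ Icc 1 T, ‖x t - x (t - 1)‖ ≤ η * G := fun t ht => by
    obtain ⟨k, rfl⟩ : ∃ k, t = k + 1 := ⟨t - 1, by grind⟩
    calc ‖x (k + 1) - x (k + 1 - 1)‖ = ‖x (k + 1) - x k‖ := by rw [Nat.add_sub_cancel]
      _ ≤ ‖η • g k‖ := h.norm_succ_sub_le hX hxX k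
      _ ≤ η * G := by
        rw [norm_smul, Real.norm_of_nonneg hη]
        exact mul_le_mul_of_nonneg_left (hG k) hη
  calc ∑ t ∈ Icc 1 T, ‖x t - x (t - 1)‖ ≤ ∑ _t ∈ Icc 1 T, η * G := sum_le_sum hstep
    _ = η * T * G := by
      simp only [sum_const, Nat.card_Icc, Nat.add_sub_cancel, nsmul_eq_mul]
      ring

end IsProjectedOGD

open Finset in
theorem stmt_13_general {d : ℕ} (T : ℕ) (X : Set (EuclideanSpace ℝ (Fin d))) (hX : Convex ℝ X)
    (D G : ℝ) (hD : ∀ a ∈ X, ∀ b ∈ X, ‖a - b‖ ≤ D)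
    (η : ℝ) (hη : 0 < η)
    (xc : ℕ → EuclideanSpace ℝ (Fin d))
    (g : ℕ → EuclideanSpace ℝ (Fin d))
    (hG : ∀ t, ‖g t‖ ≤ G)
    (s : ℕ → EuclideanSpace ℝ (Fin d) → ℝ)
    (hs : ∀ t, ∀ y, s t y = inner ℝ (g t) (y - xc t))
    (x u : ℕ → EuclideanSpace ℝ (Fin d))
    (hxX : ∀ t, x t ∈ X)
    (hproj : ∀ t : ℕ, ∀ y ∈ X,
      ‖x (t + 1) - (x t - η • g t)‖ ≤ ‖y - (x t - η • g t)‖)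
    (hu : ∀ t ≤ T, u t ∈ X) :
    ∑ t ∈ Icc 1 T, (s t (x t) + ‖x t - x (t - 1)‖) - ∑ t ∈ Icc 1 T, s t (u t) ≤
      D ^ 2 / (2 * η) + (D / η) * ∑ t ∈ Icc 1 T, ‖u t - u (t - 1)‖ +
        η * T * (G ^ 2 / 2 + G) := by
  have hogd : IsProjectedOGD X η g x := fun t => isMinOn_iff.mpr (hproj t)
  have hlin : ∀ t, s t (x t) - s t (u t) = ⟪g t, x t - u t⟫ := fun t => by
    rw [hs, hs, ← inner_sub_right, sub_sub_sub_cancel_right]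
  rw [sum_add_distrib, add_sub_right_comm, ← sum_sub_distrib]
  simp only [hlin]
  linarith [hogd.sum_inner_sub_le hX hη hD hG hxX hu, hogd.sum_norm_sub_pred_le hX hη.le hG hxX T]

open Finset in
/-- Projected online gradient descent on linearized losses `s t y = ⟪g t, y - xc t⟫`,
where `g t` is the gradient of `f t` at the meta point `xc t`, bounded by `G`.
The update is `x (t+1) = Π_X [x t - η • g t]`, characterized as the closest point of `X`. -/
theorem stmt_13 {d : ℕ} (T : ℕ) (X : Set (EuclideanSpace ℝ (Fin d))) (hX : Convex ℝ X)
    (D G : ℝ) (hD : ∀ a ∈ X, ∀ b ∈ X, ‖a - b‖ ≤ D)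
    (η : ℝ) (hη : 0 < η)
    (f : ℕ → EuclideanSpace ℝ (Fin d) → ℝ)
    (hconv : ∀ t ∈ Icc 1 T, ConvexOn ℝ X (f t))
    (xc : ℕ → EuclideanSpace ℝ (Fin d))
    (g : ℕ → EuclideanSpace ℝ (Fin d))
    (hgrad : ∀ t ∈ Icc 1 T, HasGradientAt (f t) (g t) (xc t))
    (hG : ∀ t, ‖g t‖ ≤ G)
    (s : ℕ → EuclideanSpace ℝ (Fin d) → ℝ)
    (hs : ∀ t, ∀ y, s t y = inner ℝ (g t) (y - xc t))
    (x u : ℕ → EuclideanSpace ℝ (Fin d))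
    (hx0 : x 0 ∈ X) (hxX : ∀ t, x t ∈ X)
    (hproj : ∀ t : ℕ, ∀ y ∈ X,
      ‖x (t + 1) - (x t - η • g t)‖ ≤ ‖y - (x t - η • g t)‖)
    (hu : ∀ t ≤ T, u t ∈ X) (hu01 : u 0 = u 1) :
    ∑ t ∈ Icc 1 T, (s t (x t) + ‖x t - x (t - 1)‖) - ∑ t ∈ Icc 1 T, s t (u t) ≤
      D ^ 2 / (2 * η) + (D / η) * ∑ t ∈ Icc 1 T, ‖u t - u (t - 1)‖ +
        η * T * (G ^ 2 / 2 + G) :=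
  stmt_13_general T X hX D G hD η hη xc g hG s hs x u hxX hproj hu
end

section
/- Suppose each f_t is nonnegative with λ-quadratic growth and minimizer v_t, and x_t = v_t with x_0 = u_0. Then for any ρ > 0 and any u_0, …, u_T ∈ X: Σ_{t=1}^T (f_t(x_t) + ½‖x_t - x_{t-1}‖²) ≤ (4/λ)(1 + 1/ρ)Σ_{t=1}^T f_t(u_t) + ((1+ρ)/2)Σ_{t=1}^T ‖u_t - u_{t-1}‖² + (1 - (4/λ)(1 + 1/ρ))Σ_{t=1}^T f_t(x_t). -/
/-!
Write `x_t - x_{t-1} = (u_t - u_{t-1}) + ((x_t - u_t) - (x_{t-1} - u_{t-1}))` and apply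
`‖a + b‖² ≤ (1 + ρ)‖a‖² + (1 + 1/ρ)‖b‖²`. The distances `‖x_t - u_t‖²` are then controlled by
quadratic growth, `‖u_t - v_t‖² ≤ (2/λ)(f_t(u_t) - f_t(v_t))`, and each of them enters twice
(at rounds `t` and `t + 1`): counting it once per round with weight `2` leaves the potential
`(1 + 1/ρ)‖x_t - u_t‖²`, which telescopes, vanishes at `t = 0` and is nonnegative at `t = T`.
-/

theorem norm_add_sq_le_one_add_mul {E : Type*} [SeminormedAddCommGroup E] (a b : E) {ρ : ℝ}
    (hρ : 0 < ρ) : ‖a + b‖ ^ 2 ≤ (1 + ρ) * ‖a‖ ^ 2 + (1 + 1 / ρ) * ‖b‖ ^ 2 := by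
  have hcross : 2 * ‖a‖ * ‖b‖ ≤ ρ * ‖a‖ ^ 2 + ρ⁻¹ * ‖b‖ ^ 2 := two_mul_le_add_mul_sq hρ
  have htri : ‖a + b‖ ≤ ‖a‖ + ‖b‖ := norm_add_le a b
  calc ‖a + b‖ ^ 2 ≤ (‖a‖ + ‖b‖) ^ 2 := by gcongr
    _ ≤ (1 + ρ) * ‖a‖ ^ 2 + (1 + 1 / ρ) * ‖b‖ ^ 2 := by rw [one_div]; nlinarith

theorem norm_sub_sq_le_two_mul {E : Type*} [SeminormedAddCommGroup E] (a b : E) :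
    ‖a - b‖ ^ 2 ≤ 2 * (‖a‖ ^ 2 + ‖b‖ ^ 2) := by
  have htri : ‖a - b‖ ≤ ‖a‖ + ‖b‖ := norm_sub_le a b
  calc ‖a - b‖ ^ 2 ≤ (‖a‖ + ‖b‖) ^ 2 := by gcongr
    _ ≤ 2 * (‖a‖ ^ 2 + ‖b‖ ^ 2) := by nlinarith [sq_nonneg (‖a‖ - ‖b‖)]

theorem norm_sub_sq_le_norm_sub_sq_add_deviation {E : Type*} [SeminormedAddCommGroup E]
    (x x' u u' : E) {ρ : ℝ} (hρ : 0 < ρ) :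
    ‖x - x'‖ ^ 2 ≤
      (1 + ρ) * ‖u - u'‖ ^ 2 + 2 * (1 + 1 / ρ) * (‖x - u‖ ^ 2 + ‖x' - u'‖ ^ 2) := by
  have hsplit : x - x' = (u - u') + ((x - u) - (x' - u')) := by abel
  have hdev := norm_sub_sq_le_two_mul (x - u) (x' - u')
  have hweight : 0 ≤ 1 + 1 / ρ := by positivity
  calc ‖x - x'‖ ^ 2 ≤ (1 + ρ) * ‖u - u'‖ ^ 2 + (1 + 1 / ρ) * ‖(x - u) - (x' - u')‖ ^ 2 := by
        rw [hsplit]; exact norm_add_sq_le_one_add_mul _ _ hρ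
    _ ≤ _ := by nlinarith

theorem norm_sub_sq_le_of_quadratic_growth {E : Type*} [SeminormedAddCommGroup E]
    {F : E → ℝ} {lam : ℝ} (hlam : 0 < lam) {y v : E}
    (hqg : F y - F v ≥ lam / 2 * ‖y - v‖ ^ 2) : ‖y - v‖ ^ 2 ≤ 2 / lam * (F y - F v) := by
  rw [div_mul_eq_mul_div, le_div_iff₀ hlam]
  linarith

theorem add_half_sq_norm_sub_le_of_quadratic_growth {E : Type*} [SeminormedAddCommGroup E]
    (F : E → ℝ) (x x' u u' : E) {lam ρ : ℝ} (hlam : 0 < lam) (hρ : 0 < ρ)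
    (hqg : F u - F x ≥ lam / 2 * ‖u - x‖ ^ 2) :
    F x + 1 / 2 * ‖x - x'‖ ^ 2 ≤
      4 / lam * (1 + 1 / ρ) * F u + (1 + ρ) / 2 * ‖u - u'‖ ^ 2 +
        (1 - 4 / lam * (1 + 1 / ρ)) * F x +
        ((1 + 1 / ρ) * ‖x' - u'‖ ^ 2 - (1 + 1 / ρ) * ‖x - u‖ ^ 2) := by
  have hmove := norm_sub_sq_le_norm_sub_sq_add_deviation x x' u u' hρ
  have hgrowth := norm_sub_sq_le_of_quadratic_growth hlam hqg
  rw [norm_sub_rev] at hgrowth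
  have hdouble : 2 * ‖x - u‖ ^ 2 ≤ 4 / lam * (F u - F x) := by
    linear_combination 2 * hgrowth
  have hweighted := mul_le_mul_of_nonneg_left hdouble (by positivity : (0 : ℝ) ≤ 1 + 1 / ρ)
  linear_combination (1 / 2) * hmove + hweighted

theorem sum_Icc_one_pred_sub {G : Type*} [AddCommGroup G] (g : ℕ → G) (T : ℕ) :
    ∑ t ∈ Finset.Icc 1 T, (g (t - 1) - g t) = g 0 - g T := by
  induction T with
  | zero => simp
  | succ n ih =>
    rw [Finset.sum_Icc_succ_top (by omega), ih, Nat.add_sub_cancel]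
    abel

open Finset in
theorem stmt_16_general {d : ℕ} (T : ℕ) (X : Set (EuclideanSpace ℝ (Fin d)))
    (f : ℕ → EuclideanSpace ℝ (Fin d) → ℝ)
    (v x u : ℕ → EuclideanSpace ℝ (Fin d))
    (lam ρ : ℝ) (hlam : 0 < lam) (hρ : 0 < ρ)
    (hu : ∀ t ≤ T, u t ∈ X)
    (hqg : ∀ t ∈ Icc 1 T, ∀ y ∈ X, f t y - f t (v t) ≥ lam / 2 * ‖y - v t‖ ^ 2)
    (hx : ∀ t ∈ Icc 1 T, x t = v t)
    (hx0 : x 0 = u 0) :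
    ∑ t ∈ Icc 1 T, (f t (x t) + 1 / 2 * ‖x t - x (t - 1)‖ ^ 2) ≤
      (4 / lam) * (1 + 1 / ρ) * ∑ t ∈ Icc 1 T, f t (u t) +
        (1 + ρ) / 2 * ∑ t ∈ Icc 1 T, ‖u t - u (t - 1)‖ ^ 2 +
        (1 - (4 / lam) * (1 + 1 / ρ)) * ∑ t ∈ Icc 1 T, f t (x t) := by
  set φ : ℕ → ℝ := fun t => (1 + 1 / ρ) * ‖x t - u t‖ ^ 2
  have hround : ∀ t ∈ Icc 1 T, f t (x t) + 1 / 2 * ‖x t - x (t - 1)‖ ^ 2 ≤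
      4 / lam * (1 + 1 / ρ) * f t (u t) + (1 + ρ) / 2 * ‖u t - u (t - 1)‖ ^ 2 +
        (1 - 4 / lam * (1 + 1 / ρ)) * f t (x t) + (φ (t - 1) - φ t) := by
    intro t ht
    refine add_half_sq_norm_sub_le_of_quadratic_growth (f t) _ _ _ _ hlam hρ ?_
    rw [hx t ht]
    exact hqg t ht (u t) (hu t (mem_Icc.mp ht).2)
  have hφ0 : φ 0 = 0 := by simp [φ, hx0]
  have hφT : 0 ≤ φ T := by positivity
  calc _ ≤ ∑ t ∈ Icc 1 T, (4 / lam * (1 + 1 / ρ) * f t (u t) +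
          (1 + ρ) / 2 * ‖u t - u (t - 1)‖ ^ 2 + (1 - 4 / lam * (1 + 1 / ρ)) * f t (x t) +
          (φ (t - 1) - φ t)) := sum_le_sum hround
    _ = 4 / lam * (1 + 1 / ρ) * ∑ t ∈ Icc 1 T, f t (u t) +
          (1 + ρ) / 2 * ∑ t ∈ Icc 1 T, ‖u t - u (t - 1)‖ ^ 2 +
          (1 - 4 / lam * (1 + 1 / ρ)) * ∑ t ∈ Icc 1 T, f t (x t) + (φ 0 - φ T) := by
        simp only [sum_add_distrib, ← mul_sum, sum_Icc_one_pred_sub]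
    _ ≤ _ := by linarith

open Finset in
theorem stmt_16 {d : ℕ} (T : ℕ) (X : Set (EuclideanSpace ℝ (Fin d)))
    (f : ℕ → EuclideanSpace ℝ (Fin d) → ℝ)
    (v x u : ℕ → EuclideanSpace ℝ (Fin d))
    (lam ρ : ℝ) (hlam : 0 < lam) (hρ : 0 < ρ)
    (hu : ∀ t ≤ T, u t ∈ X)
    (hvX : ∀ t ∈ Icc 1 T, v t ∈ X)
    (hnonneg : ∀ t ∈ Icc 1 T, ∀ y ∈ X, 0 ≤ f t y)
    (hmin : ∀ t ∈ Icc 1 T, ∀ y ∈ X, f t (v t) ≤ f t y)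
    (hqg : ∀ t ∈ Icc 1 T, ∀ y ∈ X, f t y - f t (v t) ≥ lam / 2 * ‖y - v t‖ ^ 2)
    (hx : ∀ t ∈ Icc 1 T, x t = v t)
    (hx0 : x 0 = u 0) :
    ∑ t ∈ Icc 1 T, (f t (x t) + 1 / 2 * ‖x t - x (t - 1)‖ ^ 2) ≤
      (4 / lam) * (1 + 1 / ρ) * ∑ t ∈ Icc 1 T, f t (u t) +
        (1 + ρ) / 2 * ∑ t ∈ Icc 1 T, ‖u t - u (t - 1)‖ ^ 2 +
        (1 - (4 / lam) * (1 + 1 / ρ)) * ∑ t ∈ Icc 1 T, f t (x t) :=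
  stmt_16_general T X f v x u lam ρ hlam hρ hu hqg hx hx0
end
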